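/- Under the setup of the previous lemma (code-functions F^n, feedback Z^n, with all stated Markov assumptions), I(F^n; Y^n) ≤ I(X^n → Y^n ‖ Z^n); i.e., the causal conditional directed information is an upper bound on the mutual information between code-functions and channel outputs. -/

import Mathlib

/-! Revealing the feedback can only help: `I(F; Y) ≤ I(F; (Y, Z))`, the gap being
`I(F; Z | Y) ≥ 0`, which is Gibbs' inequality against the law making `F` and `Z` conditionally
independent given `Y`. By the absence of feedback to the code-functions, `I(F; (Y, Z))` splits into
the per-step terms `I(Fⁱ; (Yᵢ, Zᵢ) | Yⁱ⁻¹, Zⁱ⁻¹)`. The chain rule peels off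
`I(Fⁱ; Zᵢ | Yⁱ, Zⁱ⁻¹)`, which vanishes because the feedback sees `Fⁱ` only through `(Yⁱ, Zⁱ⁻¹)`;
and since `Xⁱ` is a function of `(Fⁱ, Zⁱ⁻¹)` through which alone `Yᵢ` sees `Fⁱ`, what is left is
`I(Xⁱ; Yᵢ | Yⁱ⁻¹, Zⁱ⁻¹)`. -/

open Finset

namespace NFB

variable {Ω : Type*} [Fintype Ω]

/-- Probability that the finite random variable `X` (on finite sample space `Ω`
with weights `μ`) takes the value `a`. -/
noncomputable def pr (μ : Ω → ℝ) {α : Type*} [Fintype α] [DecidableEq α]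
    (X : Ω → α) (a : α) : ℝ :=
  ∑ ω ∈ Finset.univ.filter (fun ω => X ω = a), μ ω

/-- Conditional probability `p(X = a | Y = b)`. -/
noncomputable def condpr (μ : Ω → ℝ) {α β : Type*} [Fintype α] [DecidableEq α]
    [Fintype β] [DecidableEq β] (X : Ω → α) (Y : Ω → β) (a : α) (b : β) : ℝ :=
  pr μ (fun ω => (X ω, Y ω)) (a, b) / pr μ Y b

/-- Shannon entropy (base 2) of a finite random variable. -/
noncomputable def ent (μ : Ω → ℝ) {α : Type*} [Fintype α] [DecidableEq α]
    (X : Ω → α) : ℝ :=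
  ∑ a : α, -(pr μ X a * Real.logb 2 (pr μ X a))

/-- Shannon entropy (base 2) of a distribution given directly as a weight function. -/
noncomputable def entD {γ : Type*} [Fintype γ] (p : γ → ℝ) : ℝ :=
  ∑ c : γ, -(p c * Real.logb 2 (p c))

/-- Binary entropy function (base 2). -/
noncomputable def binent (a : ℝ) : ℝ :=
  -(a * Real.logb 2 a) - ((1 - a) * Real.logb 2 (1 - a))

/-- Conditional entropy `H(X | Y)`. -/
noncomputable def condent (μ : Ω → ℝ) {α β : Type*} [Fintype α] [DecidableEq α]
    [Fintype β] [DecidableEq β] (X : Ω → α) (Y : Ω → β) : ℝ :=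
  ent μ (fun ω => (X ω, Y ω)) - ent μ Y

/-- Mutual information `I(X; Y)`. -/
noncomputable def mi (μ : Ω → ℝ) {α β : Type*} [Fintype α] [DecidableEq α]
    [Fintype β] [DecidableEq β] (X : Ω → α) (Y : Ω → β) : ℝ :=
  ent μ X + ent μ Y - ent μ (fun ω => (X ω, Y ω))

/-- Conditional mutual information `I(X; Y | Z)`. -/
noncomputable def cmi (μ : Ω → ℝ) {α β γ : Type*} [Fintype α] [DecidableEq α]
    [Fintype β] [DecidableEq β] [Fintype γ] [DecidableEq γ]
    (X : Ω → α) (Y : Ω → β) (Z : Ω → γ) : ℝ :=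
  condent μ X Z + condent μ Y Z - condent μ (fun ω => (X ω, Y ω)) Z

/-- The length-`i` prefix of a sequence `x : Fin n → α`. -/
def pfx {α : Type*} {n : ℕ} (x : Fin n → α) (i : ℕ) (h : i ≤ n) : Fin i → α :=
  fun j => x (Fin.castLE h j)

/-- Directed information `I(Xⁿ → Yⁿ) = ∑ᵢ I(Xⁱ; Yᵢ | Yⁱ⁻¹)`. -/
noncomputable def dirinfo (μ : Ω → ℝ) {α β : Type*} [Fintype α] [DecidableEq α]
    [Fintype β] [DecidableEq β] {n : ℕ} (X : Ω → Fin n → α) (Y : Ω → Fin n → β) : ℝ :=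
  ∑ i : Fin n, cmi μ (fun ω => pfx (X ω) (i.1 + 1) i.isLt)
    (fun ω => Y ω i) (fun ω => pfx (Y ω) i.1 i.isLt.le)

/-- Conditional directed information `I(Xⁿ → Yⁿ | W) = ∑ᵢ I(Xⁱ; Yᵢ | Yⁱ⁻¹, W)`. -/
noncomputable def dirinfoCond (μ : Ω → ℝ) {α β γ : Type*} [Fintype α] [DecidableEq α]
    [Fintype β] [DecidableEq β] [Fintype γ] [DecidableEq γ]
    {n : ℕ} (X : Ω → Fin n → α) (Y : Ω → Fin n → β) (W : Ω → γ) : ℝ :=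
  ∑ i : Fin n, cmi μ (fun ω => pfx (X ω) (i.1 + 1) i.isLt)
    (fun ω => Y ω i) (fun ω => (pfx (Y ω) i.1 i.isLt.le, W ω))

/-- Causal conditional directed information
`I(Xⁿ → Yⁿ ‖ Zⁿ) = ∑ᵢ I(Xⁱ; Yᵢ | Yⁱ⁻¹, Zⁱ⁻¹)`. -/
noncomputable def dirinfoCausal (μ : Ω → ℝ) {α β γ : Type*} [Fintype α] [DecidableEq α]
    [Fintype β] [DecidableEq β] [Fintype γ] [DecidableEq γ]
    {n : ℕ} (X : Ω → Fin n → α) (Y : Ω → Fin n → β) (Z : Ω → Fin n → γ) : ℝ :=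
  ∑ i : Fin n, cmi μ (fun ω => pfx (X ω) (i.1 + 1) i.isLt)
    (fun ω => Y ω i) (fun ω => (pfx (Y ω) i.1 i.isLt.le, pfx (Z ω) i.1 i.isLt.le))

/-- Directed information from feedback to outputs
`I(Zⁿ⁻¹ → Yⁿ) = ∑ᵢ I(Zⁱ⁻¹; Yᵢ | Yⁱ⁻¹)`. -/
noncomputable def fbinfo (μ : Ω → ℝ) {ζ β : Type*} [Fintype ζ] [DecidableEq ζ]
    [Fintype β] [DecidableEq β] {n : ℕ} (Z : Ω → Fin n → ζ) (Y : Ω → Fin n → β) : ℝ :=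
  ∑ i : Fin n, cmi μ (fun ω => pfx (Z ω) i.1 i.isLt.le)
    (fun ω => Y ω i) (fun ω => pfx (Y ω) i.1 i.isLt.le)

section Entropy

variable (μ : Ω → ℝ) {α β γ : Type*} [Fintype α] [DecidableEq α] [Fintype β] [DecidableEq β]
  [Fintype γ] [DecidableEq γ]

lemma pr_nonneg (hμ0 : ∀ ω, 0 ≤ μ ω) (X : Ω → α) (a : α) : 0 ≤ pr μ X a :=
  sum_nonneg fun ω _ => hμ0 ω

lemma sum_pr (X : Ω → α) : ∑ a, pr μ X a = ∑ ω, μ ω :=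
  sum_fiberwise _ _ _

lemma pr_comp (W : Ω → α) (g : α → β) (b : β) :
    pr μ (fun ω => g (W ω)) b = ∑ a ∈ univ.filter (fun a => g a = b), pr μ W a := by
  unfold pr
  rw [sum_fiberwise_eq_sum_filter]
  simp only [mem_filter, mem_univ, true_and]

lemma pr_le_pr_comp (hμ0 : ∀ ω, 0 ≤ μ ω) (W : Ω → α) (g : α → β) (a : α) :
    pr μ W a ≤ pr μ (fun ω => g (W ω)) (g a) :=
  sum_le_sum_of_subset_of_nonneg (monotone_filter_right _ fun ω _ h => by simp only [h])
    fun ω _ _ => hμ0 ω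

lemma pr_comp_pos (hμ0 : ∀ ω, 0 ≤ μ ω) (W : Ω → α) (g : α → β) {a : α} (h : 0 < pr μ W a) :
    0 < pr μ (fun ω => g (W ω)) (g a) :=
  h.trans_le (pr_le_pr_comp μ hμ0 W g a)

lemma pr_comp_of_injective {f : α → β} (hf : f.Injective) (X : Ω → α) (a : α) :
    pr μ (fun ω => f (X ω)) (f a) = pr μ X a := by
  simp only [pr, hf.eq_iff]

lemma sum_pr_prod_left (A : Ω → α) (C : Ω → γ) (c : γ) :
    ∑ a, pr μ (fun ω => (A ω, C ω)) (a, c) = pr μ C c := by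
  rw [pr, ← sum_fiberwise _ A μ]
  refine sum_congr rfl fun a _ => ?_
  rw [pr, filter_filter]
  simp only [Prod.mk.injEq, and_comm]

lemma ent_comp_eq (W : Ω → α) (g : α → β) :
    ent μ (fun ω => g (W ω))
      = -∑ a, pr μ W a * Real.logb 2 (pr μ (fun ω => g (W ω)) (g a)) := by
  rw [ent, ← sum_fiberwise univ g, ← sum_neg_distrib]
  refine sum_congr rfl fun b _ => ?_
  rw [pr_comp μ W g b, sum_mul]
  congr 1
  refine sum_congr rfl fun a ha => ?_
  rw [(mem_filter.1 ha).2, pr_comp μ W g b]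

lemma ent_comp_of_injective {f : α → β} (hf : f.Injective) (X : Ω → α) :
    ent μ (fun ω => f (X ω)) = ent μ X := by
  rw [ent_comp_eq]
  simp only [pr_comp_of_injective μ hf, ent, sum_neg_distrib]

lemma ent_congr {A : Ω → α} {B : Ω → β} (f : α → β) (g : β → α)
    (hf : ∀ ω, f (A ω) = B ω) (hg : ∀ ω, g (B ω) = A ω) : ent μ A = ent μ B := by
  have hA := ent_comp_of_injective μ (f := fun a => (a, f a)) (fun _ _ h => congrArg Prod.fst h) A
  have hB := ent_comp_of_injective μ (f := fun b => (g b, b)) (fun _ _ h => congrArg Prod.snd h) B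
  simp only [hf, hg] at hA hB
  rw [← hA, ← hB]

lemma condent_congr_right (A : Ω → α) {B : Ω → β} {B' : Ω → γ} (f : β → γ) (g : γ → β)
    (hf : ∀ ω, f (B ω) = B' ω) (hg : ∀ ω, g (B' ω) = B ω) :
    condent μ A B = condent μ A B' := by
  rw [condent, condent, ent_congr μ f g hf hg,
    ent_congr μ (A := fun ω => (A ω, B ω)) (B := fun ω => (A ω, B' ω))
      (fun x => (x.1, f x.2)) (fun x => (x.1, g x.2)) (by simp [hf]) (by simp [hg])]

end Entropy

section InformationIdentities

variable (μ : Ω → ℝ) {α β γ δ : Type*} [Fintype α] [DecidableEq α] [Fintype β] [DecidableEq β]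
  [Fintype γ] [DecidableEq γ] [Fintype δ] [DecidableEq δ]

lemma cmi_eq_ent (A : Ω → α) (B : Ω → β) (C : Ω → γ) :
    cmi μ A B C = ent μ (fun ω => (A ω, C ω)) + ent μ (fun ω => (B ω, C ω)) - ent μ C
      - ent μ (fun ω => ((A ω, B ω), C ω)) := by
  simp only [cmi, condent]
  ring

lemma cmi_comm (A : Ω → α) (B : Ω → β) (C : Ω → γ) : cmi μ A B C = cmi μ B A C := by
  have h : ent μ (fun ω => ((A ω, B ω), C ω)) = ent μ (fun ω => ((B ω, A ω), C ω)) :=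
    ent_congr μ (fun x => (x.1.swap, x.2)) (fun x => (x.1.swap, x.2)) (fun _ => rfl) (fun _ => rfl)
  rw [cmi_eq_ent, cmi_eq_ent, h]
  ring

lemma cmi_eq_condent_sub_condent (A : Ω → α) (B : Ω → β) (C : Ω → γ) :
    cmi μ A B C = condent μ A C - condent μ A (fun ω => (B ω, C ω)) := by
  have h : ent μ (fun ω => ((A ω, B ω), C ω)) = ent μ (fun ω => (A ω, (B ω, C ω))) :=
    ent_congr μ (Equiv.prodAssoc α β γ) (Equiv.prodAssoc α β γ).symm (fun _ => rfl) (fun _ => rfl)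
  rw [cmi_eq_ent, condent, condent, h]
  ring

lemma cmi_prod_right (A : Ω → α) (B₁ : Ω → β) (B₂ : Ω → γ) (C : Ω → δ) :
    cmi μ A (fun ω => (B₁ ω, B₂ ω)) C
      = cmi μ A B₁ C + cmi μ A B₂ (fun ω => (B₁ ω, C ω)) := by
  have h : condent μ A (fun ω => ((B₁ ω, B₂ ω), C ω))
      = condent μ A (fun ω => (B₂ ω, (B₁ ω, C ω))) :=
    condent_congr_right μ A (fun x => (x.1.2, (x.1.1, x.2))) (fun x => ((x.2.1, x.1), x.2.2))
      (fun _ => rfl) (fun _ => rfl)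
  rw [cmi_eq_condent_sub_condent, cmi_eq_condent_sub_condent, cmi_eq_condent_sub_condent, h]
  ring

lemma mi_prod_right (A : Ω → α) (B : Ω → β) (C : Ω → γ) :
    mi μ A (fun ω => (B ω, C ω)) = mi μ A B + cmi μ A C B := by
  have h₁ : ent μ (fun ω => (C ω, B ω)) = ent μ (fun ω => (B ω, C ω)) :=
    ent_congr μ Prod.swap Prod.swap (fun _ => rfl) (fun _ => rfl)
  have h₂ : ent μ (fun ω => ((A ω, C ω), B ω)) = ent μ (fun ω => (A ω, (B ω, C ω))) :=
    ent_congr μ (fun x => (x.1.1, (x.2, x.1.2))) (fun x => ((x.1, x.2.2), x.2.1))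
      (fun _ => rfl) (fun _ => rfl)
  rw [cmi_eq_ent, mi, mi, h₁, h₂]
  ring

end InformationIdentities

lemma mul_logb_div_le {p q : ℝ} (hp : 0 ≤ p) (hq : 0 ≤ q) (hpq : 0 < p → 0 < q) :
    p * Real.logb 2 (q / p) ≤ (q - p) / Real.log 2 := by
  rcases hp.eq_or_lt with rfl | hp
  · simpa using div_nonneg hq (Real.log_nonneg one_le_two)
  · rw [Real.logb, ← mul_div_assoc]
    gcongr
    calc p * Real.log (q / p) ≤ p * (q / p - 1) :=
          mul_le_mul_of_nonneg_left (Real.log_le_sub_one_of_pos (div_pos (hpq hp) hp)) hp.le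
      _ = q - p := by field_simp

section ConditionalIndependence

variable (μ : Ω → ℝ) {α β γ : Type*} [Fintype α] [DecidableEq α] [Fintype β] [DecidableEq β]
  [Fintype γ] [DecidableEq γ] (A : Ω → α) (B : Ω → β) (C : Ω → γ)

noncomputable def condIndepLaw (t : (α × β) × γ) : ℝ :=
  pr μ (fun ω => (A ω, C ω)) (t.1.1, t.2) * pr μ (fun ω => (B ω, C ω)) (t.1.2, t.2) / pr μ C t.2

lemma condIndepLaw_nonneg (hμ0 : ∀ ω, 0 ≤ μ ω) (t : (α × β) × γ) :
    0 ≤ condIndepLaw μ A B C t :=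
  div_nonneg (mul_nonneg (pr_nonneg μ hμ0 _ _) (pr_nonneg μ hμ0 _ _)) (pr_nonneg μ hμ0 _ _)

lemma condIndepLaw_pos (hμ0 : ∀ ω, 0 ≤ μ ω) {t : (α × β) × γ}
    (ht : 0 < pr μ (fun ω => ((A ω, B ω), C ω)) t) : 0 < condIndepLaw μ A B C t :=
  div_pos (mul_pos (pr_comp_pos μ hμ0 _ (fun t => (t.1.1, t.2)) ht)
    (pr_comp_pos μ hμ0 _ (fun t => (t.1.2, t.2)) ht)) (pr_comp_pos μ hμ0 _ Prod.snd ht)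

lemma sum_condIndepLaw : ∑ t, condIndepLaw μ A B C t = ∑ ω, μ ω := by
  calc ∑ t, condIndepLaw μ A B C t
      = ∑ c, (∑ a, pr μ (fun ω => (A ω, C ω)) (a, c))
          * (∑ b, pr μ (fun ω => (B ω, C ω)) (b, c)) / pr μ C c := by
        rw [Fintype.sum_prod_type_right]
        refine sum_congr rfl fun c _ => ?_
        rw [Fintype.sum_prod_type, sum_mul_sum, sum_div]
        simp only [sum_div, condIndepLaw]
    _ = ∑ ω, μ ω := by simp only [sum_pr_prod_left, mul_self_div_self, sum_pr]

lemma cmi_eq_neg_sum_mul_logb_condIndepLaw (hμ0 : ∀ ω, 0 ≤ μ ω) :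
    cmi μ A B C = -∑ t, pr μ (fun ω => ((A ω, B ω), C ω)) t
      * Real.logb 2 (condIndepLaw μ A B C t / pr μ (fun ω => ((A ω, B ω), C ω)) t) := by
  set T : Ω → (α × β) × γ := fun ω => ((A ω, B ω), C ω)
  set p := pr μ T
  set pAC := pr μ (fun ω => (A ω, C ω))
  set pBC := pr μ (fun ω => (B ω, C ω))
  set pC := pr μ C
  have hlog : ∀ t, p t * Real.logb 2 (condIndepLaw μ A B C t / p t) = p t * (Real.logb 2
      (pAC (t.1.1, t.2)) + Real.logb 2 (pBC (t.1.2, t.2)) - Real.logb 2 (pC t.2)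
      - Real.logb 2 (p t)) := by
    intro t
    rcases (pr_nonneg μ hμ0 T t).eq_or_lt with h | h
    · simp [p, ← h]
    · have hAC : 0 < pAC (t.1.1, t.2) := pr_comp_pos μ hμ0 T (fun t => (t.1.1, t.2)) h
      have hBC : 0 < pBC (t.1.2, t.2) := pr_comp_pos μ hμ0 T (fun t => (t.1.2, t.2)) h
      have hC : 0 < pC t.2 := pr_comp_pos μ hμ0 T Prod.snd h
      rw [Real.logb_div (condIndepLaw_pos μ A B C hμ0 h).ne' h.ne', condIndepLaw,
        Real.logb_div (mul_pos hAC hBC).ne' hC.ne', Real.logb_mul hAC.ne' hBC.ne']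
  have hT : ent μ T = -∑ t, p t * Real.logb 2 (p t) := by rw [ent, sum_neg_distrib]
  have hAC : ent μ (fun ω => (A ω, C ω)) = -∑ t, p t * Real.logb 2 (pAC (t.1.1, t.2)) :=
    ent_comp_eq μ T (fun t => (t.1.1, t.2))
  have hBC : ent μ (fun ω => (B ω, C ω)) = -∑ t, p t * Real.logb 2 (pBC (t.1.2, t.2)) :=
    ent_comp_eq μ T (fun t => (t.1.2, t.2))
  have hC : ent μ C = -∑ t, p t * Real.logb 2 (pC t.2) := ent_comp_eq μ T Prod.snd
  rw [cmi_eq_ent, hT, hAC, hBC, hC]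
  simp only [hlog, mul_add, mul_sub, sum_add_distrib, sum_sub_distrib]
  ring

lemma cmi_nonneg (hμ0 : ∀ ω, 0 ≤ μ ω) : 0 ≤ cmi μ A B C := by
  have hgibbs := sum_le_sum fun t (_ : t ∈ univ) => mul_logb_div_le (pr_nonneg μ hμ0 _ t)
    (condIndepLaw_nonneg μ A B C hμ0 t) (condIndepLaw_pos μ A B C hμ0)
  rw [← sum_div, sum_sub_distrib, sum_condIndepLaw, sum_pr, sub_self, zero_div] at hgibbs
  rw [cmi_eq_neg_sum_mul_logb_condIndepLaw μ A B C hμ0]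
  linarith

lemma mi_le_mi_prod_right (hμ0 : ∀ ω, 0 ≤ μ ω) :
    mi μ A B ≤ mi μ A (fun ω => (B ω, C ω)) := by
  rw [mi_prod_right]
  linarith [cmi_nonneg μ A C B hμ0]

end ConditionalIndependence

section CodeFunctions

variable (μ : Ω → ℝ) {φ χ β ζ γ : Type*} [Fintype φ] [DecidableEq φ] [Fintype χ] [DecidableEq χ]
  [Fintype β] [DecidableEq β] [Fintype ζ] [DecidableEq ζ] [Fintype γ] [DecidableEq γ]

lemma cmi_prod_eq_of_markov (F : Ω → φ) (X : Ω → χ) (Y : Ω → β) (Z : Ω → ζ) (C : Ω → γ)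
    (G : φ × γ → χ) (hX : ∀ ω, X ω = G (F ω, C ω))
    (hfb : condent μ Z (fun ω => (F ω, (Y ω, C ω))) = condent μ Z (fun ω => (Y ω, C ω)))
    (hch : condent μ Y (fun ω => (X ω, (F ω, C ω))) = condent μ Y (fun ω => (X ω, C ω))) :
    cmi μ F (fun ω => (Y ω, Z ω)) C = cmi μ X Y C := by
  have hfeedback : cmi μ F Z (fun ω => (Y ω, C ω)) = 0 := by
    rw [cmi_comm, cmi_eq_condent_sub_condent, hfb, sub_self]
  have hX' : condent μ Y (fun ω => (F ω, C ω)) = condent μ Y (fun ω => (X ω, (F ω, C ω))) :=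
    condent_congr_right μ Y (fun x => (G x, x)) Prod.snd (fun ω => by rw [hX]) (fun _ => rfl)
  rw [cmi_prod_right, hfeedback, add_zero, cmi_comm, cmi_eq_condent_sub_condent, cmi_comm,
    cmi_eq_condent_sub_condent, hX', hch]

end CodeFunctions

lemma snoc_pfx {α : Type*} {n : ℕ} (x : Fin n → α) (i : Fin n) :
    Fin.snoc (α := fun _ => α) (pfx x i.1 i.isLt.le) (x i) = pfx x (i.1 + 1) i.isLt :=
  Fin.snoc_init_self (pfx x (i.1 + 1) i.isLt)

lemma exists_pfx_eq_of_causal {ι α ζ φ : Type*} {n : ℕ} (F : ι → Fin n → φ) (X : ι → Fin n → α)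
    (Z : ι → Fin n → ζ)
    (hX : ∀ i : Fin n, ∃ g : (Fin (i.1 + 1) → φ) × (Fin i.1 → ζ) → α,
      ∀ ω, X ω i = g (pfx (F ω) (i.1 + 1) i.isLt, pfx (Z ω) i.1 i.isLt.le))
    (i : Fin n) :
    ∃ G : (Fin (i.1 + 1) → φ) × (Fin i.1 → ζ) → (Fin (i.1 + 1) → α),
      ∀ ω, pfx (X ω) (i.1 + 1) i.isLt
        = G (pfx (F ω) (i.1 + 1) i.isLt, pfx (Z ω) i.1 i.isLt.le) := by
  choose g hg using hX
  have hj : ∀ j : Fin (i.1 + 1), j.1 < n := fun j => j.isLt.trans_le i.isLt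
  refine ⟨fun fz j => g ⟨j, hj j⟩
    (pfx fz.1 (j.1 + 1) j.isLt, pfx fz.2 j.1 (Nat.lt_succ_iff.1 j.isLt)),
    fun ω => funext fun j => hg ⟨j, hj j⟩ ω⟩

lemma cmi_pfx_eq_of_markov (μ : Ω → ℝ) {α β ζ φ : Type*} [Fintype α] [DecidableEq α]
    [Fintype β] [DecidableEq β] [Fintype ζ] [DecidableEq ζ] [Fintype φ] [DecidableEq φ]
    {n : ℕ} (F : Ω → Fin n → φ) (X : Ω → Fin n → α) (Y : Ω → Fin n → β) (Z : Ω → Fin n → ζ)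
    (i : Fin n) (G : (Fin (i.1 + 1) → φ) × (Fin i.1 → ζ) → (Fin (i.1 + 1) → α))
    (hG : ∀ ω, pfx (X ω) (i.1 + 1) i.isLt
        = G (pfx (F ω) (i.1 + 1) i.isLt, pfx (Z ω) i.1 i.isLt.le))
    (hfb : condent μ (fun ω => Z ω i)
          (fun ω => (pfx (Y ω) (i.1 + 1) i.isLt, pfx (Z ω) i.1 i.isLt.le,
            pfx (F ω) (i.1 + 1) i.isLt))
      = condent μ (fun ω => Z ω i)
          (fun ω => (pfx (Y ω) (i.1 + 1) i.isLt, pfx (Z ω) i.1 i.isLt.le)))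
    (hch : condent μ (fun ω => Y ω i)
          (fun ω => (pfx (Y ω) i.1 i.isLt.le, pfx (X ω) (i.1 + 1) i.isLt,
            pfx (Z ω) i.1 i.isLt.le, pfx (F ω) (i.1 + 1) i.isLt))
      = condent μ (fun ω => Y ω i)
          (fun ω => (pfx (Y ω) i.1 i.isLt.le, pfx (X ω) (i.1 + 1) i.isLt,
            pfx (Z ω) i.1 i.isLt.le))) :
    cmi μ (fun ω => pfx (F ω) (i.1 + 1) i.isLt) (fun ω => (Y ω i, Z ω i))
        (fun ω => (pfx (Y ω) i.1 i.isLt.le, pfx (Z ω) i.1 i.isLt.le))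
      = cmi μ (fun ω => pfx (X ω) (i.1 + 1) i.isLt) (fun ω => Y ω i)
        (fun ω => (pfx (Y ω) i.1 i.isLt.le, pfx (Z ω) i.1 i.isLt.le)) := by
  refine cmi_prod_eq_of_markov μ _ _ _ _ _ (fun x => G (x.1, x.2.2)) hG ?_ ?_
  · refine (condent_congr_right μ _ (fun x => (Fin.snoc x.2.2.1 x.2.1, x.2.2.2, x.1))
      (fun x => (x.2.2, (x.1 (Fin.last i), (Fin.init x.1, x.2.1)))) ?_ ?_).trans
      (hfb.trans (condent_congr_right μ _ (fun x => (x.1 (Fin.last i), (Fin.init x.1, x.2)))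
      (fun x => (Fin.snoc x.2.1 x.1, x.2.2)) ?_ ?_))
    all_goals intro ω; first | rfl | rw [snoc_pfx]
  · refine (condent_congr_right μ _ (fun x => (x.2.2.1, x.1, x.2.2.2, x.2.1))
      (fun x => (x.2.1, (x.2.2.2, (x.1, x.2.2.1)))) ?_ ?_).trans
      (hch.trans (condent_congr_right μ _ (fun x => (x.2.1, (x.1, x.2.2)))
      (fun x => (x.2.1, x.1, x.2.2)) ?_ ?_))
    all_goals exact fun _ => rfl

theorem stmt17_general {Ω : Type*} [Fintype Ω] (μ : Ω → ℝ)
    (hμ0 : ∀ ω, 0 ≤ μ ω)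
    {α β ζ φ : Type*} [Fintype α] [DecidableEq α] [Fintype β] [DecidableEq β]
    [Fintype ζ] [DecidableEq ζ] [Fintype φ] [DecidableEq φ]
    {n : ℕ} (F : Ω → Fin n → φ) (X : Ω → Fin n → α) (Y : Ω → Fin n → β)
    (Z : Ω → Fin n → ζ)
    (hX : ∀ i : Fin n, ∃ g : (Fin (i.1 + 1) → φ) × (Fin i.1 → ζ) → α,
      ∀ ω, X ω i = g (pfx (F ω) (i.1 + 1) i.isLt, pfx (Z ω) i.1 i.isLt.le))
    (hnofb : mi μ F (fun ω => (Y ω, Z ω))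
      = ∑ i : Fin n, cmi μ (fun ω => pfx (F ω) (i.1 + 1) i.isLt)
          (fun ω => (Y ω i, Z ω i))
          (fun ω => (pfx (Y ω) i.1 i.isLt.le, pfx (Z ω) i.1 i.isLt.le)))
    (hfb : ∀ i : Fin n,
      condent μ (fun ω => Z ω i)
          (fun ω => (pfx (Y ω) (i.1 + 1) i.isLt, pfx (Z ω) i.1 i.isLt.le,
            pfx (F ω) (i.1 + 1) i.isLt))
      = condent μ (fun ω => Z ω i)
          (fun ω => (pfx (Y ω) (i.1 + 1) i.isLt, pfx (Z ω) i.1 i.isLt.le)))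
    (hch : ∀ i : Fin n,
      condent μ (fun ω => Y ω i)
          (fun ω => (pfx (Y ω) i.1 i.isLt.le, pfx (X ω) (i.1 + 1) i.isLt,
            pfx (Z ω) i.1 i.isLt.le, pfx (F ω) (i.1 + 1) i.isLt))
      = condent μ (fun ω => Y ω i)
          (fun ω => (pfx (Y ω) i.1 i.isLt.le, pfx (X ω) (i.1 + 1) i.isLt,
            pfx (Z ω) i.1 i.isLt.le))) :
    mi μ F Y ≤ dirinfoCausal μ X Y Z := by
  calc mi μ F Y ≤ mi μ F (fun ω => (Y ω, Z ω)) := mi_le_mi_prod_right μ F Y Z hμ0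
    _ = _ := hnofb
    _ = dirinfoCausal μ X Y Z := sum_congr rfl fun i _ => by
        obtain ⟨G, hG⟩ := exists_pfx_eq_of_causal F X Z hX i
        exact cmi_pfx_eq_of_markov μ F X Y Z i G hG (hfb i) (hch i)

/-- under the code-function setup of the previous lemma,
`I(Fⁿ; Yⁿ) ≤ I(Xⁿ → Yⁿ ‖ Zⁿ)`. -/
theorem stmt17 {Ω : Type*} [Fintype Ω] (μ : Ω → ℝ)
    (hμ0 : ∀ ω, 0 ≤ μ ω) (hμ1 : ∑ ω, μ ω = 1)
    {α β ζ φ : Type*} [Fintype α] [DecidableEq α] [Fintype β] [DecidableEq β]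
    [Fintype ζ] [DecidableEq ζ] [Fintype φ] [DecidableEq φ]
    {n : ℕ} (F : Ω → Fin n → φ) (X : Ω → Fin n → α) (Y : Ω → Fin n → β)
    (Z : Ω → Fin n → ζ)
    (hX : ∀ i : Fin n, ∃ g : (Fin (i.1 + 1) → φ) × (Fin i.1 → ζ) → α,
      ∀ ω, X ω i = g (pfx (F ω) (i.1 + 1) i.isLt, pfx (Z ω) i.1 i.isLt.le))
    (hnofb : mi μ F (fun ω => (Y ω, Z ω))
      = ∑ i : Fin n, cmi μ (fun ω => pfx (F ω) (i.1 + 1) i.isLt)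
          (fun ω => (Y ω i, Z ω i))
          (fun ω => (pfx (Y ω) i.1 i.isLt.le, pfx (Z ω) i.1 i.isLt.le)))
    (hfb : ∀ i : Fin n,
      condent μ (fun ω => Z ω i)
          (fun ω => (pfx (Y ω) (i.1 + 1) i.isLt, pfx (Z ω) i.1 i.isLt.le,
            pfx (F ω) (i.1 + 1) i.isLt))
      = condent μ (fun ω => Z ω i)
          (fun ω => (pfx (Y ω) (i.1 + 1) i.isLt, pfx (Z ω) i.1 i.isLt.le)))
    (hch : ∀ i : Fin n,
      condent μ (fun ω => Y ω i)
          (fun ω => (pfx (Y ω) i.1 i.isLt.le, pfx (X ω) (i.1 + 1) i.isLt,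
            pfx (Z ω) i.1 i.isLt.le, pfx (F ω) (i.1 + 1) i.isLt))
      = condent μ (fun ω => Y ω i)
          (fun ω => (pfx (Y ω) i.1 i.isLt.le, pfx (X ω) (i.1 + 1) i.isLt,
            pfx (Z ω) i.1 i.isLt.le))) :
    mi μ F Y ≤ dirinfoCausal μ X Y Z :=
  stmt17_general μ hμ0 F X Y Z hX hnofb hfb hch

end NFB
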